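/- Let G be a connected graph with minimum degree δ. If G contains two adjacent vertices both of degree δ, then for every k with 3 ≤ k ≤ |V(G)|, the generalized k-edge-connectivity satisfies λ_k(G) ≤ δ − 1. -/

import Mathlib

open Classical

variable {V W : Type*}

/-- An `S`-Steiner tree: a subgraph of `G` that is a tree and contains `S`. -/
def IsSteinerTree (G : SimpleGraph V) (S : Set V) (T : G.Subgraph) : Prop :=
  S ⊆ T.verts ∧ T.coe.IsTree

/-- There exist `n` pairwise edge-disjoint `S`-Steiner trees in `G`. -/
def HasSteinerPacking (G : SimpleGraph V) (S : Set V) (n : ℕ) : Prop :=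
  ∃ T : Fin n → G.Subgraph, (∀ i, IsSteinerTree G S (T i)) ∧
    ∀ i j, i ≠ j → (T i).edgeSet ∩ (T j).edgeSet = ∅

/-- `λ(S)`: maximum number of pairwise edge-disjoint `S`-Steiner trees. -/
noncomputable def steinerNum (G : SimpleGraph V) (S : Set V) : ℕ :=
  sSup {n | HasSteinerPacking G S n}

/-- Generalized `k`-edge-connectivity `λ_k(G)`. -/
noncomputable def genEdgeConn (G : SimpleGraph V) (k : ℕ) : ℕ :=
  sInf {m | ∃ S : Set V, S.Finite ∧ S.ncard = k ∧ steinerNum G S = m}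

/-- Edge-connectivity: minimum number of edges whose deletion disconnects `G`. -/
noncomputable def edgeConn (G : SimpleGraph V) : ℕ :=
  sInf {m | ∃ F : Set (Sym2 V), F ⊆ G.edgeSet ∧ F.ncard = m ∧ ¬ (G.deleteEdges F).Connected}

/-- Degree of a vertex as the cardinality of its neighbor set. -/
noncomputable def degOf (G : SimpleGraph V) (v : V) : ℕ :=
  (G.neighborSet v).ncard

/-- Minimum degree. -/
noncomputable def minDeg (G : SimpleGraph V) : ℕ :=
  sInf {d | ∃ v, degOf G v = d}

/-- The lexicographic product `G ∘ H`. -/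
def lexProd (G : SimpleGraph V) (H : SimpleGraph W) : SimpleGraph (V × W) where
  Adj p q := G.Adj p.1 q.1 ∨ (p.1 = q.1 ∧ H.Adj p.2 q.2)
  symm := ⟨by
    rintro p q (h | ⟨h1, h2⟩)
    · exact Or.inl h.symm
    · exact Or.inr ⟨h1.symm, h2.symm⟩⟩
  loopless := ⟨by
    rintro p (h | ⟨_, h⟩)
    · exact G.irrefl h
    · exact H.irrefl h⟩

/-! Choose `S` of size `k` containing the adjacent minimum-degree vertices `x`, `y` and a third
vertex `z`. An `S`-Steiner tree is connected and passes through `x`, `y`, `z`, so at least two of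
its edges meet `{x, y}`. As `x` and `y` share only the edge `xy`, exactly `2δ - 1` edges of `G`
meet `{x, y}`, so at most `δ - 1` edge-disjoint `S`-Steiner trees fit. -/

lemma Set.card_mul_le_ncard_of_pairwise_disjoint {α ι : Type*} [Fintype ι] {E : Set α}
    (hE : E.Finite) {A : ι → Set α} (hA : Pairwise fun i j ↦ Disjoint (A i) (A j))
    (hAE : ∀ i, A i ⊆ E) {m : ℕ} (hm : ∀ i, m ≤ (A i).ncard) : Fintype.card ι * m ≤ E.ncard :=
  calc Fintype.card ι * m = ∑ _ : ι, m := by simp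
    _ ≤ ∑ i, (A i).ncard := Finset.sum_le_sum fun i _ ↦ hm i
    _ = (⋃ i, A i).ncard := by
      rw [Set.ncard_iUnion_of_finite (fun i ↦ hE.subset (hAE i)) hA, finsum_eq_sum_of_fintype]
    _ ≤ E.ncard := Set.ncard_le_ncard (Set.iUnion_subset hAE) hE

namespace SimpleGraph

variable {V : Type*} {G : SimpleGraph V}

lemma Subgraph.exists_adj_mem_notMem_of_preconnected {T : G.Subgraph} (hT : T.coe.Preconnected)
    {u v : V} (hu : u ∈ T.verts) (hv : v ∈ T.verts) {S : Set V} (huS : u ∈ S) (hvS : v ∉ S) :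
    ∃ a b, T.Adj a b ∧ a ∈ S ∧ b ∉ S := by
  obtain ⟨p⟩ := hT ⟨u, hu⟩ ⟨v, hv⟩
  obtain ⟨d, -, hd, hd'⟩ := p.exists_boundary_dart (Subtype.val ⁻¹' S) huS hvS
  exact ⟨_, _, d.adj, hd, hd'⟩

lemma Subgraph.exists_adj_of_preconnected {T : G.Subgraph} (hT : T.coe.Preconnected)
    {u v : V} (hu : u ∈ T.verts) (hv : v ∈ T.verts) (huv : u ≠ v) : ∃ b, T.Adj u b := by
  obtain ⟨a, b, hab, ha, -⟩ :=
    exists_adj_mem_notMem_of_preconnected hT hu hv (S := {u}) rfl huv.symm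
  rw [Set.mem_singleton_iff] at ha
  exact ⟨b, ha ▸ hab⟩

/-- If `T` contains edges `xb` and `yc`, these are distinct unless both are `xy`; in that case
the edge along which a path from `x` to `z` leaves `{x, y}` is a second one. -/
lemma Subgraph.exists_ne_mem_edgeSet_incident {T : G.Subgraph} (hT : T.coe.Preconnected)
    {x y z : V} (hx : x ∈ T.verts) (hy : y ∈ T.verts) (hz : z ∈ T.verts)
    (hxy : x ≠ y) (hzx : z ≠ x) (hzy : z ≠ y) :
    ∃ e₁ e₂, e₁ ∈ T.edgeSet ∧ e₂ ∈ T.edgeSet ∧ e₁ ≠ e₂ ∧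
      (x ∈ e₁ ∨ y ∈ e₁) ∧ (x ∈ e₂ ∨ y ∈ e₂) := by
  obtain ⟨b, hxb⟩ := exists_adj_of_preconnected hT hx hy hxy
  obtain ⟨c, hyc⟩ := exists_adj_of_preconnected hT hy hx hxy.symm
  by_cases hbc : s(x, b) = s(y, c)
  · obtain ⟨a, o, hao, ha, ho⟩ :=
      exists_adj_mem_notMem_of_preconnected hT hx hz (S := {x, y}) (by simp) (by simp [hzx, hzy])
    have hb : b = y := by
      rcases Sym2.eq_iff.1 hbc with ⟨h, -⟩ | ⟨-, h⟩
      · exact absurd h hxy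
      · exact h
    subst hb
    refine ⟨s(x, b), s(a, o), hxb, hao, ?_, by simp, ?_⟩
    · intro h
      have : o ∈ s(x, b) := h ▸ Sym2.mem_mk_right a o
      simp_all
    · rcases ha with rfl | rfl <;> simp
  · exact ⟨s(x, b), s(y, c), hxb, hyc, hbc, by simp, by simp⟩

lemma ncard_incidenceSet_eq_degOf (x : V) : (G.incidenceSet x).ncard = degOf G x := by
  rw [degOf, ← Nat.card_coe_set_eq, ← Nat.card_coe_set_eq]
  exact Nat.card_congr (G.incidenceSetEquivNeighborSet x)

lemma ncard_incidenceSet_union_add_one [Finite V] {x y : V} (hxy : G.Adj x y) :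
    (G.incidenceSet x ∪ G.incidenceSet y).ncard + 1 = degOf G x + degOf G y := by
  have hunion := Set.ncard_union_add_ncard_inter (G.incidenceSet x) (G.incidenceSet y)
  rwa [G.incidenceSet_inter_incidenceSet_of_adj hxy, Set.ncard_singleton,
    ncard_incidenceSet_eq_degOf, ncard_incidenceSet_eq_degOf] at hunion

end SimpleGraph

open SimpleGraph

section Steiner

variable {V : Type*} {G : SimpleGraph V} {S : Set V}

lemma HasSteinerPacking.two_mul_le_ncard_incidenceSet_union [Finite V] {n : ℕ}
    (hP : HasSteinerPacking G S n) {x y z : V} (hx : x ∈ S) (hy : y ∈ S) (hz : z ∈ S)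
    (hxy : x ≠ y) (hzx : z ≠ x) (hzy : z ≠ y) :
    2 * n ≤ (G.incidenceSet x ∪ G.incidenceSet y).ncard := by
  obtain ⟨T, hT, hdisj⟩ := hP
  set E := G.incidenceSet x ∪ G.incidenceSet y
  have htwo (i : Fin n) : 2 ≤ ((T i).edgeSet ∩ E).ncard := by
    obtain ⟨hS, htree⟩ := hT i
    obtain ⟨e₁, e₂, he₁, he₂, hne, hinc₁, hinc₂⟩ :=
      Subgraph.exists_ne_mem_edgeSet_incident htree.connected.preconnected
        (hS hx) (hS hy) (hS hz) hxy hzx hzy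
    have hmem {e} (he : e ∈ (T i).edgeSet) (hinc : x ∈ e ∨ y ∈ e) : e ∈ (T i).edgeSet ∩ E :=
      ⟨he, hinc.imp (⟨(T i).edgeSet_subset he, ·⟩) (⟨(T i).edgeSet_subset he, ·⟩)⟩
    exact (Set.one_lt_ncard_iff (Set.toFinite _)).2 ⟨e₁, e₂, hmem he₁ hinc₁, hmem he₂ hinc₂, hne⟩
  simpa [mul_comm] using Set.card_mul_le_ncard_of_pairwise_disjoint (Set.toFinite E)
    (A := fun i ↦ (T i).edgeSet ∩ E)
    (fun i j hij ↦ Set.disjoint_iff_inter_eq_empty.2 (by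
      rw [Set.inter_inter_inter_comm, hdisj i j hij, Set.empty_inter]))
    (fun _ ↦ Set.inter_subset_right) htwo

lemma steinerNum_le_of_forall_hasSteinerPacking {m : ℕ}
    (h : ∀ n, HasSteinerPacking G S n → n ≤ m) : steinerNum G S ≤ m :=
  csSup_le ⟨0, Fin.elim0, fun i ↦ i.elim0, fun i ↦ i.elim0⟩ h

lemma genEdgeConn_le_steinerNum {k : ℕ} (hS : S.Finite) (hk : S.ncard = k) :
    genEdgeConn G k ≤ steinerNum G S :=
  Nat.sInf_le ⟨S, hS, hk, rfl⟩

end Steiner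

lemma exists_finset_card_eq_of_ne {V : Type*} [Fintype V] {x y : V} (hxy : x ≠ y) {k : ℕ}
    (hk3 : 3 ≤ k) (hkn : k ≤ Fintype.card V) :
    ∃ t : Finset V, t.card = k ∧ x ∈ t ∧ y ∈ t ∧ ∃ z ∈ t, z ≠ x ∧ z ≠ y := by
  obtain ⟨t, hsub, hcard⟩ :=
    Finset.exists_superset_card_eq ((Finset.card_pair hxy).trans_le (by omega)) hkn
  obtain ⟨z, hz⟩ : (t \ {x, y}).Nonempty := by
    rw [← Finset.card_pos, Finset.card_sdiff_of_subset hsub, Finset.card_pair hxy]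
    omega
  simp only [Finset.mem_sdiff, Finset.mem_insert, Finset.mem_singleton, not_or] at hz
  exact ⟨t, hcard, hsub (by simp), hsub (by simp), z, hz.1, hz.2⟩

theorem stmt2_general {V : Type*} [Fintype V] (G : SimpleGraph V)
    (x y : V) (hxy : G.Adj x y) (hx : degOf G x = minDeg G) (hy : degOf G y = minDeg G)
    (k : ℕ) (hk3 : 3 ≤ k) (hkn : k ≤ Fintype.card V) :
    genEdgeConn G k ≤ minDeg G - 1 := by
  obtain ⟨t, htk, hxt, hyt, z, hzt, hzx, hzy⟩ := exists_finset_card_eq_of_ne hxy.ne hk3 hkn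
  have hpacking : steinerNum G t ≤ minDeg G - 1 := by
    refine steinerNum_le_of_forall_hasSteinerPacking fun n hP ↦ ?_
    have h2n := hP.two_mul_le_ncard_incidenceSet_union hxt hyt hzt hxy.ne hzx hzy
    have hdeg := ncard_incidenceSet_union_add_one hxy
    rw [hx, hy] at hdeg
    omega
  exact (genEdgeConn_le_steinerNum t.finite_toSet (by simpa using htk)).trans hpacking

theorem stmt2 {V : Type*} [Fintype V] (G : SimpleGraph V) (hG : G.Connected)
    (x y : V) (hxy : G.Adj x y) (hx : degOf G x = minDeg G) (hy : degOf G y = minDeg G)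
    (k : ℕ) (hk3 : 3 ≤ k) (hkn : k ≤ Fintype.card V) :
    genEdgeConn G k ≤ minDeg G - 1 :=
  stmt2_general G x y hxy hx hy k hk3 hkn
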